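/- arXiv:1603.08995 — 5 statements merged into one kernel-verified Lean document; each statement's English description precedes it below -/
import Mathlib

section
/- (Knudsen's theorem.) Assume (Rμc − C_p c)/C_w ≥ 1, so that n_b = ⌊(Rμc − C_p c)/C_w⌋ ≥ 1. Then there exists a natural number n_so with 1 ≤ n_so ≤ n_b such that U_sw(n) ≤ U_sw(n_so) for every natural number n; in particular U_sw(n_b) ≤ U_sw(n_so), i.e., the socially optimal balking level is at most the individually (Nash) selected balking level and achieves at least as much welfare. -/
/-!
A customer who finds `k` others in the system gains `β_k ≥ 0` exactly when `k < n_b`. Writing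
`U_sw(n) = λ (∑_{k<n} d_k β_k) / D_n`, for `n ≥ n_b` the numerator only gains nonpositive terms while
the denominator grows, so `U_sw(n) ≤ U_sw(n_b)`; also `U_sw(0) = 0 ≤ U_sw(n_b)`. Hence the maximum
of `U_sw` over the finite set `{1, …, n_b}` is a global maximum.
-/

open Finset

section SignChange

variable {w f : ℕ → ℝ} {m : ℕ}

lemma sum_range_mul_nonneg (hw : ∀ k, 0 ≤ w k) (hf : ∀ k < m, 0 ≤ f k) :
    0 ≤ ∑ k ∈ range m, w k * f k :=
  sum_nonneg fun k hk => mul_nonneg (hw k) (hf k (mem_range.1 hk))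

lemma sum_range_mul_le_of_nonpos_of_le (hw : ∀ k, 0 ≤ w k) (hf : ∀ k, m ≤ k → f k ≤ 0)
    {n : ℕ} (hmn : m ≤ n) :
    ∑ k ∈ range n, w k * f k ≤ ∑ k ∈ range m, w k * f k := by
  rw [← sum_range_add_sum_Ico _ hmn, add_le_iff_nonpos_right]
  exact sum_nonpos fun k hk => mul_nonpos_of_nonneg_of_nonpos (hw k) (hf k (mem_Ico.1 hk).1)

lemma sum_range_mul_div_le_of_sign_change (hw : ∀ k, 0 < w k) (hpos : ∀ k < m, 0 ≤ f k)
    (hneg : ∀ k, m ≤ k → f k ≤ 0) {n : ℕ} (hmn : m ≤ n) :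
    (∑ k ∈ range n, w k * f k) / ∑ k ∈ range (n + 1), w k ≤
      (∑ k ∈ range m, w k * f k) / ∑ k ∈ range (m + 1), w k := by
  have hw' : ∀ k, 0 ≤ w k := fun k => (hw k).le
  apply div_le_div₀ (sum_range_mul_nonneg hw' hpos) (sum_range_mul_le_of_nonpos_of_le hw' hneg hmn)
    (sum_pos (fun k _ => hw k) nonempty_range_add_one)
  exact sum_le_sum_of_subset_of_nonneg (range_subset_range.2 (by omega)) fun k _ _ => hw' k

end SignChange

lemma exists_forall_le_of_tail_le {α : Type*} [LinearOrder α] (g : ℕ → α) {m : ℕ} (hm : 1 ≤ m)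
    (h0 : g 0 ≤ g m) (htail : ∀ n, m ≤ n → g n ≤ g m) :
    ∃ n₀, 1 ≤ n₀ ∧ n₀ ≤ m ∧ ∀ n, g n ≤ g n₀ := by
  obtain ⟨n₀, hn₀, hmax⟩ := exists_max_image (Icc 1 m) g ⟨m, mem_Icc.2 ⟨hm, le_rfl⟩⟩
  have hm_le : g m ≤ g n₀ := hmax m (mem_Icc.2 ⟨hm, le_rfl⟩)
  refine ⟨n₀, (mem_Icc.1 hn₀).1, (mem_Icc.1 hn₀).2, fun n => ?_⟩
  rcases Nat.eq_zero_or_pos n with rfl | hn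
  · exact h0.trans hm_le
  rcases le_or_gt n m with hnm | hmn
  · exact hmax n (mem_Icc.2 ⟨hn, hnm⟩)
  · exact (htail n hmn.le).trans hm_le

lemma utility_nonneg_iff {R Cw Cp μ c : ℝ} (hCw : 0 < Cw) (hμ : 0 < μ) (hc : 0 < c) (k : ℝ) :
    0 ≤ R - Cw * (k + 1) / (μ * c) - Cp / μ ↔ k + 1 ≤ (R * μ * c - Cp * c) / Cw := by
  have hsplit : R - Cw * (k + 1) / (μ * c) - Cp / μ =
      (R * μ * c - Cp * c - Cw * (k + 1)) / (μ * c) := by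
    field_simp
    ring
  rw [hsplit, le_div_iff₀ (by positivity), le_div_iff₀ hCw]
  constructor <;> intro h <;> linarith

lemma Nat.lt_floor_iff_add_one_le {α : Type*} [Semiring α] [LinearOrder α] [FloorSemiring α]
    [IsStrictOrderedRing α] {x : α} {k : ℕ} : k < ⌊x⌋₊ ↔ (k : α) + 1 ≤ x := by
  rw [Nat.lt_iff_add_one_le, Nat.le_floor_iff' k.succ_ne_zero, Nat.cast_add_one]

theorem knudsen_socially_optimal_balking_general
    (R Cw Cp μ lam : ℝ) (c : ℕ)
    (hCw : 0 < Cw) (hμ : 0 < μ) (hlam : 0 < lam)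
    (hc : 1 ≤ c)
    (ρ : ℝ) (hρ : ρ = lam / (c * μ))
    (β : ℕ → ℝ)
    (hβ : ∀ k : ℕ, β k = R - Cw * (k + 1) / (μ * c) - Cp / μ)
    (d : ℕ → ℝ)
    (hd : ∀ k : ℕ, d k = if k < c then (ρ * c) ^ k / (Nat.factorial k)
        else (ρ * c) ^ c / (Nat.factorial c) * ρ ^ (k - c))
    (D : ℕ → ℝ) (hD : ∀ n : ℕ, D n = ∑ k ∈ Finset.range (n + 1), d k)
    (Usw : ℕ → ℝ)
    (hU : ∀ n : ℕ, Usw n = lam * ∑ k ∈ Finset.range n, (d k / D n) * β k)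
    (hfloor : 1 ≤ (R * μ * c - Cp * c) / Cw)
    (nb : ℕ) (hnb : nb = ⌊(R * μ * c - Cp * c) / Cw⌋₊) :
    ∃ nso : ℕ, 1 ≤ nso ∧ nso ≤ nb ∧ (∀ n : ℕ, Usw n ≤ Usw nso) ∧
      Usw nb ≤ Usw nso := by
  have hc_pos : (0 : ℝ) < c := by exact_mod_cast hc
  have hρ_pos : 0 < ρ := hρ ▸ by positivity
  have hd_pos : ∀ k, 0 < d k := fun k => by rw [hd]; split <;> positivity
  have hβ_sign : ∀ k, 0 ≤ β k ↔ k < nb := fun k => by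
    rw [hβ, utility_nonneg_iff hCw hμ hc_pos, hnb, Nat.lt_floor_iff_add_one_le]
  have hβ_nonneg : ∀ k < nb, 0 ≤ β k := fun k => (hβ_sign k).2
  have hβ_nonpos : ∀ k, nb ≤ k → β k ≤ 0 := fun k hk =>
    (not_le.1 fun h => hk.not_gt ((hβ_sign k).1 h)).le
  have hU_eq : ∀ n, Usw n = lam * ((∑ k ∈ range n, d k * β k) / D n) := fun n => by
    simp only [hU, sum_div, div_mul_eq_mul_div]
  have hnb_pos : 1 ≤ nb := hnb ▸ Nat.le_floor (by exact_mod_cast hfloor)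
  have hU_zero_le : Usw 0 ≤ Usw nb := by
    rw [hU_eq, hU_eq, range_zero, sum_empty, zero_div, mul_zero]
    have hd_nonneg : ∀ k, 0 ≤ d k := fun k => (hd_pos k).le
    exact mul_nonneg hlam.le (div_nonneg (sum_range_mul_nonneg hd_nonneg hβ_nonneg)
      (hD nb ▸ sum_nonneg fun k _ => hd_nonneg k))
  have hU_tail : ∀ n, nb ≤ n → Usw n ≤ Usw nb := fun n hn => by
    rw [hU_eq, hU_eq, hD, hD]
    exact mul_le_mul_of_nonneg_left
      (sum_range_mul_div_le_of_sign_change hd_pos hβ_nonneg hβ_nonpos hn) hlam.le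
  obtain ⟨nso, h1, hle, hmax⟩ := exists_forall_le_of_tail_le Usw hnb_pos hU_zero_le hU_tail
  exact ⟨nso, h1, hle, hmax, hmax nb⟩

/-- Knudsen's theorem: there exists a socially optimal balking level `n_so` with
`1 ≤ n_so ≤ n_b` maximizing the social welfare `U_sw` over all of `ℕ`;
in particular `U_sw n_b ≤ U_sw n_so`. -/
theorem knudsen_socially_optimal_balking
    (R Cw Cp μ lam : ℝ) (c : ℕ)
    (hR : 0 < R) (hCw : 0 < Cw) (hCp : 0 < Cp) (hμ : 0 < μ) (hlam : 0 < lam)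
    (hc : 1 ≤ c)
    (ρ : ℝ) (hρ : ρ = lam / (c * μ))
    (β : ℕ → ℝ)
    (hβ : ∀ k : ℕ, β k = R - Cw * (k + 1) / (μ * c) - Cp / μ)
    (d : ℕ → ℝ)
    (hd : ∀ k : ℕ, d k = if k < c then (ρ * c) ^ k / (Nat.factorial k)
        else (ρ * c) ^ c / (Nat.factorial c) * ρ ^ (k - c))
    (D : ℕ → ℝ) (hD : ∀ n : ℕ, D n = ∑ k ∈ Finset.range (n + 1), d k)
    (Usw : ℕ → ℝ)
    (hU : ∀ n : ℕ, Usw n = lam * ∑ k ∈ Finset.range n, (d k / D n) * β k)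
    (hfloor : 1 ≤ (R * μ * c - Cp * c) / Cw)
    (nb : ℕ) (hnb : nb = ⌊(R * μ * c - Cp * c) / Cw⌋₊) :
    ∃ nso : ℕ, 1 ≤ nso ∧ nso ≤ nb ∧ (∀ n : ℕ, Usw n ≤ Usw nso) ∧
      Usw nb ≤ Usw nso :=
  knudsen_socially_optimal_balking_general R Cw Cp μ lam c hCw hμ hlam hc ρ hρ β hβ d hd D hD Usw hU
    hfloor nb hnb
end

section
/- (Pricing mechanism achieving a target balking level; this covers both the socially optimal target n_so and the congestion-limited target n_cl.) Let m ≥ 1 be a natural number (the target balking level) and let Ĉ_p > 0 be a new parking price, with modified utilities β̂_k = R − C_w(k+1)/(μc) − Ĉ_p/μ. If α_m < Ĉ_p/μ ≤ α_{m−1}, then β̂_{m−1} ≥ 0 > β̂_m, and consequently the balking level under the new price equals m, i.e., ⌊(Rμc − Ĉ_p c)/C_w⌋ = m. Conversely, if β̂_{m−1} ≥ 0 > β̂_m then α_m < Ĉ_p/μ ≤ α_{m−1}. -/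
/-!
Writing `x = (Rμc − Ĉ_p c)/C_w`, every utility is an affine function of the queue length with
root `x`: `R − C_w t/(μc) − Ĉ_p/μ = (C_w/(μc)) (x − t)`. Hence `β̂_k ≥ 0` iff `k + 1 ≤ x`, so
`β̂_{m−1} ≥ 0 > β̂_m` says exactly `m ≤ x < m + 1`, i.e. `⌊x⌋₊ = m`; the equivalence with
`α_m < Ĉ_p/μ ≤ α_{m−1}` is a rearrangement.
-/

lemma Nat.floor_eq_iff_mul_sub_nonneg_and_neg {K : Type*} [Field K] [LinearOrder K]
    [IsStrictOrderedRing K] [FloorSemiring K] {a x : K} (ha : 0 < a) {m : ℕ} (hm : m ≠ 0) :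
    ⌊x⌋₊ = m ↔ 0 ≤ a * (x - m) ∧ a * (x - (m + 1)) < 0 := by
  have hneg {b : K} : a * b < 0 ↔ b < 0 :=
    ⟨fun h => neg_of_mul_neg_right h ha.le, mul_neg_of_pos_of_neg ha⟩
  rw [Nat.floor_eq_iff' hm, mul_nonneg_iff_of_pos_left ha, hneg, sub_nonneg, sub_neg]

lemma utility_eq_mul_sub_balkingThreshold {K : Type*} [Field K] {R Cw μ c Cp : K} (hCw : Cw ≠ 0) (hμ : μ ≠ 0)
    (hc : c ≠ 0) (t : K) :
    R - Cw * t / (μ * c) - Cp / μ = Cw / (μ * c) * ((R * μ * c - Cp * c) / Cw - t) := by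
  field_simp
  ring

theorem pricing_mechanism_balking_level_general
    (R Cw μ : ℝ) (c : ℕ)
    (hCw : 0 < Cw) (hμ : 0 < μ) (hc : 1 ≤ c)
    (α : ℕ → ℝ) (hα : ∀ k : ℕ, α k = R - Cw * (k + 1) / (μ * c))
    (Cphat : ℝ)
    (βhat : ℕ → ℝ) (hβ : ∀ k : ℕ, βhat k = α k - Cphat / μ)
    (m : ℕ) (hm : 1 ≤ m) :
    ((α m < Cphat / μ ∧ Cphat / μ ≤ α (m - 1)) →
      (0 ≤ βhat (m - 1) ∧ βhat m < 0 ∧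
        ⌊(R * μ * c - Cphat * c) / Cw⌋₊ = m)) ∧
    ((0 ≤ βhat (m - 1) ∧ βhat m < 0) →
      (α m < Cphat / μ ∧ Cphat / μ ≤ α (m - 1))) := by
  have hc₀ : (c : ℝ) ≠ 0 := by positivity
  have hβ_eq (k : ℕ) : βhat k = Cw / (μ * c) * ((R * μ * c - Cphat * c) / Cw - (k + 1)) := by
    rw [hβ, hα, utility_eq_mul_sub_balkingThreshold hCw.ne' hμ.ne' hc₀]
  have hpred : ((m - 1 : ℕ) : ℝ) + 1 = m := by rw [Nat.cast_pred hm, sub_add_cancel]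
  have hsign_iff :
      (0 ≤ βhat (m - 1) ∧ βhat m < 0) ↔ (α m < Cphat / μ ∧ Cphat / μ ≤ α (m - 1)) := by
    rw [hβ, hβ, sub_nonneg, sub_neg, and_comm]
  have hfloor : (0 ≤ βhat (m - 1) ∧ βhat m < 0) → ⌊(R * μ * c - Cphat * c) / Cw⌋₊ = m := by
    rw [hβ_eq, hβ_eq, hpred]
    exact (Nat.floor_eq_iff_mul_sub_nonneg_and_neg (by positivity) (by omega)).mpr
  refine ⟨fun h => ?_, hsign_iff.mp⟩
  obtain ⟨hβ_pred, hβ_m⟩ := hsign_iff.mpr h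
  exact ⟨hβ_pred, hβ_m, hfloor ⟨hβ_pred, hβ_m⟩⟩

/-- Pricing mechanism achieving a target balking level `m ≥ 1`: under the new price
`Ĉ_p`, if `α m < Ĉ_p/μ ≤ α (m−1)` then `β̂ (m−1) ≥ 0 > β̂ m` and the induced balking
level `⌊(Rμc − Ĉ_p c)/C_w⌋` equals `m`; conversely `β̂ (m−1) ≥ 0 > β̂ m` implies
`α m < Ĉ_p/μ ≤ α (m−1)`. -/
theorem pricing_mechanism_balking_level
    (R Cw μ : ℝ) (c : ℕ)
    (hR : 0 < R) (hCw : 0 < Cw) (hμ : 0 < μ) (hc : 1 ≤ c)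
    (α : ℕ → ℝ) (hα : ∀ k : ℕ, α k = R - Cw * (k + 1) / (μ * c))
    (Cphat : ℝ) (hCphat : 0 < Cphat)
    (βhat : ℕ → ℝ) (hβ : ∀ k : ℕ, βhat k = α k - Cphat / μ)
    (m : ℕ) (hm : 1 ≤ m) :
    ((α m < Cphat / μ ∧ Cphat / μ ≤ α (m - 1)) →
      (0 ≤ βhat (m - 1) ∧ βhat m < 0 ∧
        ⌊(R * μ * c - Cphat * c) / Cw⌋₊ = m)) ∧
    ((0 ≤ βhat (m - 1) ∧ βhat m < 0) →
      (α m < Cphat / μ ∧ Cphat / μ ≤ α (m - 1))) :=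
  pricing_mechanism_balking_level_general R Cw μ c hCw hμ hc α hα Cphat βhat hβ m hm
end

section
/- (Welfare difference identity.) For every natural number n with n ≥ c − 1, D_n > 0, D_{n+1} > 0, and U_sw(n+1) − U_sw(n) = (λ d_n / (D_n D_{n+1})) · (β_n D_n − ρ S_n), where S_n = ∑_{k=0}^{n−1} d_k β_k. -/
/-!
The stationary weights of the M/M/c/N queue satisfy `d (n + 1) = ρ * d n` as soon as `n + 1 ≥ c`,
so `D (n + 1) = D n + ρ * d n`. Writing `U_sw n = λ S_n / D_n`, the difference `U_sw (n + 1) - U_sw n`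
is `λ (S_n + d_n β_n) / (D_n + ρ d_n) - λ S_n / D_n`, and bringing it to the common denominator
`D_n D_{n+1}` gives the identity. Positivity of `D_n` holds because `d_0 = 1` and all weights are
nonnegative.
-/

open Finset

namespace Queueing

noncomputable section

/-- The unnormalized stationary probability of `k` customers in an M/M/c queue. -/
def mmcWeight (ρ : ℝ) (c k : ℕ) : ℝ :=
  if k < c then (ρ * c) ^ k / k.factorial else (ρ * c) ^ c / c.factorial * ρ ^ (k - c)

def normalizer (f : ℕ → ℝ) (n : ℕ) : ℝ :=
  ∑ k ∈ range (n + 1), f k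

def welfare (lam : ℝ) (f β : ℕ → ℝ) (n : ℕ) : ℝ :=
  lam * ∑ k ∈ range n, (f k / normalizer f n) * β k

end

variable {ρ : ℝ} {c : ℕ}

@[simp]
theorem mmcWeight_zero (ρ : ℝ) (c : ℕ) : mmcWeight ρ c 0 = 1 := by
  unfold mmcWeight
  split_ifs with hc
  · simp
  · simp [Nat.eq_zero_of_not_pos hc]

theorem mmcWeight_nonneg (hρ : 0 ≤ ρ) (k : ℕ) : 0 ≤ mmcWeight ρ c k := by
  unfold mmcWeight
  split_ifs <;> positivity

theorem mmcWeight_succ {n : ℕ} (hn : c - 1 ≤ n) : mmcWeight ρ c (n + 1) = ρ * mmcWeight ρ c n := by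
  unfold mmcWeight
  rw [if_neg (by omega)]
  split_ifs with hnc
  · obtain rfl : c = n + 1 := by omega
    simp only [Nat.sub_self, pow_zero, mul_one, Nat.factorial_succ, Nat.cast_mul, pow_succ]
    field_simp
  · rw [show n + 1 - c = n - c + 1 by omega, pow_succ]
    ring

theorem one_le_normalizer {f : ℕ → ℝ} (hf₀ : f 0 = 1) (hf : ∀ k, 0 ≤ f k) (n : ℕ) :
    1 ≤ normalizer f n :=
  hf₀ ▸ single_le_sum (fun k _ => hf k) (mem_range.2 n.succ_pos)

theorem welfare_eq_div (lam : ℝ) (f β : ℕ → ℝ) (n : ℕ) :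
    welfare lam f β n = lam * (∑ k ∈ range n, f k * β k) / normalizer f n := by
  simp only [welfare, mul_div_assoc, sum_div, div_mul_eq_mul_div]

theorem welfare_succ_sub_welfare (lam : ℝ) {f : ℕ → ℝ} (β : ℕ → ℝ) {n : ℕ}
    (hf : f (n + 1) = ρ * f n) (h₀ : normalizer f n ≠ 0) (h₁ : normalizer f (n + 1) ≠ 0) :
    welfare lam f β (n + 1) - welfare lam f β n =
      lam * f n / (normalizer f n * normalizer f (n + 1)) *
        (β n * normalizer f n - ρ * ∑ k ∈ range n, f k * β k) := by
  have hsucc : normalizer f (n + 1) = normalizer f n + ρ * f n := by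
    rw [normalizer, sum_range_succ, hf, normalizer]
  rw [welfare_eq_div, welfare_eq_div, sum_range_succ, hsucc]
  rw [hsucc] at h₁
  rw [div_sub_div _ _ h₁ h₀, div_mul_eq_mul_div, div_eq_div_iff (mul_ne_zero h₁ h₀) (mul_ne_zero h₀ h₁)]
  ring

end Queueing

open Queueing in
theorem welfare_difference_identity_general
    (μ lam : ℝ) (c : ℕ)
    (hμ : 0 < μ) (hlam : 0 < lam)
    (ρ : ℝ) (hρ : ρ = lam / (c * μ))
    (β : ℕ → ℝ)
    (d : ℕ → ℝ)
    (hd : ∀ k : ℕ, d k = if k < c then (ρ * c) ^ k / (Nat.factorial k)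
        else (ρ * c) ^ c / (Nat.factorial c) * ρ ^ (k - c))
    (D : ℕ → ℝ) (hD : ∀ n : ℕ, D n = ∑ k ∈ Finset.range (n + 1), d k)
    (Usw : ℕ → ℝ)
    (hU : ∀ n : ℕ, Usw n = lam * ∑ k ∈ Finset.range n, (d k / D n) * β k)
    (n : ℕ) (hn : c - 1 ≤ n) :
    0 < D n ∧ 0 < D (n + 1) ∧
      Usw (n + 1) - Usw n =
        lam * d n / (D n * D (n + 1)) *
          (β n * D n - ρ * ∑ k ∈ Finset.range n, d k * β k) := by
  have hρ₀ : 0 ≤ ρ := hρ ▸ by positivity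
  obtain rfl : d = mmcWeight ρ c := funext hd
  obtain rfl : D = normalizer (mmcWeight ρ c) := funext hD
  obtain rfl : Usw = welfare lam (mmcWeight ρ c) β := funext hU
  have hpos (m : ℕ) : 0 < normalizer (mmcWeight ρ c) m :=
    one_pos.trans_le (one_le_normalizer (mmcWeight_zero ρ c) (mmcWeight_nonneg hρ₀) m)
  exact ⟨hpos n, hpos (n + 1),
    welfare_succ_sub_welfare lam β (mmcWeight_succ hn) (hpos n).ne' (hpos (n + 1)).ne'⟩

/-- Welfare difference identity: for `n ≥ c − 1`, `D n > 0`, `D (n+1) > 0`, and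
`U_sw (n+1) − U_sw n = (λ d_n/(D_n D_{n+1}))·(β_n D_n − ρ S_n)` where
`S_n = ∑_{k<n} d_k β_k`. -/
theorem welfare_difference_identity
    (R Cw Cp μ lam : ℝ) (c : ℕ)
    (hR : 0 < R) (hCw : 0 < Cw) (hCp : 0 < Cp) (hμ : 0 < μ) (hlam : 0 < lam)
    (hc : 1 ≤ c)
    (ρ : ℝ) (hρ : ρ = lam / (c * μ))
    (β : ℕ → ℝ)
    (hβ : ∀ k : ℕ, β k = R - Cw * (k + 1) / (μ * c) - Cp / μ)
    (d : ℕ → ℝ)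
    (hd : ∀ k : ℕ, d k = if k < c then (ρ * c) ^ k / (Nat.factorial k)
        else (ρ * c) ^ c / (Nat.factorial c) * ρ ^ (k - c))
    (D : ℕ → ℝ) (hD : ∀ n : ℕ, D n = ∑ k ∈ Finset.range (n + 1), d k)
    (Usw : ℕ → ℝ)
    (hU : ∀ n : ℕ, Usw n = lam * ∑ k ∈ Finset.range n, (d k / D n) * β k)
    (n : ℕ) (hn : c - 1 ≤ n) :
    0 < D n ∧ 0 < D (n + 1) ∧
      Usw (n + 1) - Usw n =
        lam * d n / (D n * D (n + 1)) *
          (β n * D n - ρ * ∑ k ∈ Finset.range n, d k * β k) :=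
  welfare_difference_identity_general μ lam c hμ hlam ρ hρ β d hd D hD Usw hU n hn
end

section
/- (Unimodality of social welfare.) For every natural number n with n ≥ c: if U_sw(n) − U_sw(n−1) ≤ 0, then U_sw(n+1) − U_sw(n) < 0. -/
/-!
Write `U_sw n = λ A n`, with `A n` the expected reward per arrival under threshold `n`. Clearing
denominators gives `D (n + 1) (A (n + 1) - A n) = d n β n - d (n + 1) A n`, so once the weights grow
geometrically (`d (n + 1) = ρ d n`, i.e. `n + 1 ≥ c`) the increment has the sign of `β n - ρ A n`.
If this is `≤ 0`, then
`ρ D (n + 1) A (n + 1) = ρ D n A n + d (n + 1) β n ≥ D (n + 1) β n > D (n + 1) β (n + 1)`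
because `β` is strictly decreasing, so the next increment is negative.
-/

open Finset Nat

noncomputable def mmcWeight (ρ : ℝ) (c k : ℕ) : ℝ :=
  if k < c then (ρ * c) ^ k / k ! else (ρ * c) ^ c / c ! * ρ ^ (k - c)

lemma mmcWeight_pos {ρ : ℝ} {c : ℕ} (hρ : 0 < ρ) (hc : 0 < c) (k : ℕ) : 0 < mmcWeight ρ c k := by
  unfold mmcWeight
  split_ifs <;> positivity

lemma mmcWeight_succ (ρ : ℝ) {c k : ℕ} (hk : c ≤ k + 1) :
    mmcWeight ρ c (k + 1) = ρ * mmcWeight ρ c k := by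
  unfold mmcWeight
  rcases hk.eq_or_lt with rfl | hlt
  · rw [if_neg (lt_irrefl _), if_pos k.lt_succ_self, Nat.sub_self, pow_zero, mul_one, pow_succ,
      factorial_succ]
    push_cast
    field_simp
  · rw [if_neg (by omega), if_neg (by omega), show k + 1 - c = k - c + 1 by omega, pow_succ]
    ring

section ThresholdReward

variable {d : ℕ → ℝ} {β : ℕ → ℝ}

/-- Expected reward per arrival when arrivals join iff fewer than `n` customers are present and the
stationary distribution on `{0, …, n}` is proportional to `d`. -/
noncomputable def thresholdReward (d β : ℕ → ℝ) (n : ℕ) : ℝ :=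
  ∑ k ∈ range n, d k / (∑ j ∈ range (n + 1), d j) * β k

lemma thresholdReward_eq_div (n : ℕ) :
    thresholdReward d β n = (∑ k ∈ range n, d k * β k) / ∑ j ∈ range (n + 1), d j := by
  rw [thresholdReward, sum_div]
  exact sum_congr rfl fun k _ => div_mul_eq_mul_div _ _ _

lemma sum_range_succ_pos_of_pos (hd : ∀ k, 0 < d k) (n : ℕ) : 0 < ∑ j ∈ range (n + 1), d j :=
  sum_pos (fun k _ => hd k) nonempty_range_add_one

lemma mass_mul_thresholdReward_succ (hd : ∀ k, 0 < d k) (n : ℕ) :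
    (∑ j ∈ range (n + 2), d j) * thresholdReward d β (n + 1) =
      (∑ j ∈ range (n + 1), d j) * thresholdReward d β n + d n * β n := by
  rw [thresholdReward_eq_div, thresholdReward_eq_div,
    mul_div_cancel₀ _ (sum_range_succ_pos_of_pos hd _).ne',
    mul_div_cancel₀ _ (sum_range_succ_pos_of_pos hd _).ne', sum_range_succ]

lemma mass_mul_thresholdReward_succ_sub (hd : ∀ k, 0 < d k) {ρ : ℝ} {n : ℕ}
    (hstep : d (n + 1) = ρ * d n) :
    (∑ j ∈ range (n + 2), d j) * (thresholdReward d β (n + 1) - thresholdReward d β n) =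
      d n * (β n - ρ * thresholdReward d β n) := by
  rw [mul_sub, mass_mul_thresholdReward_succ hd, sum_range_succ _ (n + 1), hstep]
  ring

lemma lt_mul_thresholdReward_succ (hd : ∀ k, 0 < d k) {ρ : ℝ} {n : ℕ}
    (hstep : d (n + 1) = ρ * d n) (hβ : β (n + 1) < β n) (h : β n ≤ ρ * thresholdReward d β n) :
    β (n + 1) < ρ * thresholdReward d β (n + 1) := by
  have hmass := sum_range_succ_pos_of_pos hd (n + 1)
  refine lt_of_mul_lt_mul_left ?_ hmass.le
  calc (∑ j ∈ range (n + 2), d j) * β (n + 1)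
      < (∑ j ∈ range (n + 2), d j) * β n := mul_lt_mul_of_pos_left hβ hmass
    _ = (∑ j ∈ range (n + 1), d j) * β n + ρ * (d n * β n) := by
        rw [sum_range_succ _ (n + 1), hstep]; ring
    _ ≤ (∑ j ∈ range (n + 1), d j) * (ρ * thresholdReward d β n) + ρ * (d n * β n) := by
        gcongr; exact (sum_range_succ_pos_of_pos hd n).le
    _ = ρ * ((∑ j ∈ range (n + 2), d j) * thresholdReward d β (n + 1)) := by
        rw [mass_mul_thresholdReward_succ hd]; ring
    _ = (∑ j ∈ range (n + 2), d j) * (ρ * thresholdReward d β (n + 1)) := by ring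

theorem thresholdReward_succ_sub_neg_of_nonpos (hd : ∀ k, 0 < d k) (hβ : StrictAnti β) {ρ : ℝ}
    {n : ℕ} (hstep : d (n + 1) = ρ * d n) (hstep' : d (n + 2) = ρ * d (n + 1))
    (h : thresholdReward d β (n + 1) - thresholdReward d β n ≤ 0) :
    thresholdReward d β (n + 2) - thresholdReward d β (n + 1) < 0 := by
  have hgap : β n - ρ * thresholdReward d β n ≤ 0 := by
    refine nonpos_of_mul_nonpos_right ?_ (hd n)
    rw [← mass_mul_thresholdReward_succ_sub hd hstep]
    exact mul_nonpos_of_nonneg_of_nonpos (sum_range_succ_pos_of_pos hd _).le h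
  have hgap' : β (n + 1) - ρ * thresholdReward d β (n + 1) < 0 :=
    sub_neg.2 (lt_mul_thresholdReward_succ hd hstep (hβ n.lt_succ_self) (sub_nonpos.1 hgap))
  refine neg_of_mul_neg_right ?_ (sum_range_succ_pos_of_pos hd (n + 2)).le
  rw [mass_mul_thresholdReward_succ_sub hd hstep']
  exact mul_neg_of_pos_of_neg (hd _) hgap'

end ThresholdReward

theorem social_welfare_unimodal_general
    (R Cw Cp μ lam : ℝ) (c : ℕ)
    (hCw : 0 < Cw) (hμ : 0 < μ) (hlam : 0 < lam)
    (hc : 1 ≤ c)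
    (ρ : ℝ) (hρ : ρ = lam / (c * μ))
    (β : ℕ → ℝ)
    (hβ : ∀ k : ℕ, β k = R - Cw * (k + 1) / (μ * c) - Cp / μ)
    (d : ℕ → ℝ)
    (hd : ∀ k : ℕ, d k = if k < c then (ρ * c) ^ k / (Nat.factorial k)
        else (ρ * c) ^ c / (Nat.factorial c) * ρ ^ (k - c))
    (D : ℕ → ℝ) (hD : ∀ n : ℕ, D n = ∑ k ∈ Finset.range (n + 1), d k)
    (Usw : ℕ → ℝ)
    (hU : ∀ n : ℕ, Usw n = lam * ∑ k ∈ Finset.range n, (d k / D n) * β k)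
    (n : ℕ) (hn : c ≤ n) :
    Usw n - Usw (n - 1) ≤ 0 → Usw (n + 1) - Usw n < 0 := by
  obtain rfl : D = fun n => ∑ k ∈ range (n + 1), d k := funext hD
  obtain rfl : Usw = fun n => lam * thresholdReward d β n := funext hU
  obtain rfl : d = mmcWeight ρ c := funext hd
  have hc0 : (0 : ℝ) < c := by exact_mod_cast hc
  have hρ0 : 0 < ρ := hρ ▸ by positivity
  have hβ_anti : StrictAnti β := strictAnti_nat_of_succ_lt fun k => by
    rw [hβ, hβ]; push_cast; gcongr; linarith
  obtain ⟨m, rfl⟩ : ∃ m, n = m + 1 := ⟨n - 1, by omega⟩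
  intro h
  simp only [Nat.add_sub_cancel, ← mul_sub] at h ⊢
  exact mul_neg_of_pos_of_neg hlam <|
    thresholdReward_succ_sub_neg_of_nonpos (mmcWeight_pos hρ0 hc) hβ_anti
      (mmcWeight_succ ρ hn) (mmcWeight_succ ρ (by omega))
      (nonpos_of_mul_nonpos_right h hlam)

/-- Unimodality of social welfare: for `n ≥ c`, if `U_sw n − U_sw (n−1) ≤ 0`
then `U_sw (n+1) − U_sw n < 0`. -/
theorem social_welfare_unimodal
    (R Cw Cp μ lam : ℝ) (c : ℕ)
    (hR : 0 < R) (hCw : 0 < Cw) (hCp : 0 < Cp) (hμ : 0 < μ) (hlam : 0 < lam)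
    (hc : 1 ≤ c)
    (ρ : ℝ) (hρ : ρ = lam / (c * μ))
    (β : ℕ → ℝ)
    (hβ : ∀ k : ℕ, β k = R - Cw * (k + 1) / (μ * c) - Cp / μ)
    (d : ℕ → ℝ)
    (hd : ∀ k : ℕ, d k = if k < c then (ρ * c) ^ k / (Nat.factorial k)
        else (ρ * c) ^ c / (Nat.factorial c) * ρ ^ (k - c))
    (D : ℕ → ℝ) (hD : ∀ n : ℕ, D n = ∑ k ∈ Finset.range (n + 1), d k)
    (Usw : ℕ → ℝ)
    (hU : ∀ n : ℕ, Usw n = lam * ∑ k ∈ Finset.range n, (d k / D n) * β k)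
    (n : ℕ) (hn : c ≤ n) :
    Usw n - Usw (n - 1) ≤ 0 → Usw (n + 1) - Usw n < 0 :=
  social_welfare_unimodal_general R Cw Cp μ lam c hCw hμ hlam hc ρ hρ β hβ d hd D hD Usw hU n hn
end

section
/- (Welfare comparison for congestion-limited balking levels.) Suppose n_so ≥ c is a natural number at which U_sw attains its maximum over ℕ (i.e., U_sw(n) ≤ U_sw(n_so) for all n ∈ ℕ). Then U_sw is nonincreasing on {m ∈ ℕ : m ≥ n_so}; consequently, for any natural numbers n_cl and n_b with n_so ≤ n_cl ≤ n_b, one has U_sw(n_b) ≤ U_sw(n_cl), i.e., setting a congestion-limited balking level below the user-selected one cannot decrease social welfare. -/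
/-!
Write `U_sw(n) = λ S_n / D_n` with `S_n = ∑_{k<n} d_k β_k`. Beyond `c` the weights are geometric,
`d_{n+1} = ρ d_n`, and then `S_{n+1} D_n - S_n D_{n+1} = d_n g_n` with `g_n = β_n D_n - ρ S_n`, so
`U_sw(n+1) ≤ U_sw(n)` exactly when `g_n ≤ 0`. Moreover `g_{n+1} - g_n = (β_{n+1} - β_n) D_{n+1} ≤ 0`
because the utilities decrease. Maximality at `n_so` gives `g_{n_so} ≤ 0`, hence `g_n ≤ 0` for all
`n ≥ n_so`, and `U_sw` decreases from `n_so` on.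
-/

open Finset

section GeometricTail

variable {d β : ℕ → ℝ} {ρ : ℝ} {n : ℕ}

def partitionSum (d : ℕ → ℝ) (n : ℕ) : ℝ := ∑ k ∈ range (n + 1), d k

def rewardSum (d β : ℕ → ℝ) (n : ℕ) : ℝ := ∑ k ∈ range n, d k * β k

/-- `∑_{k<n} p_k(n) β_k` for the truncated distribution `p_k(n) = d_k / D_n`. -/
noncomputable def averageReward (d β : ℕ → ℝ) (n : ℕ) : ℝ := rewardSum d β n / partitionSum d n

def welfareGap (d β : ℕ → ℝ) (ρ : ℝ) (n : ℕ) : ℝ := β n * partitionSum d n - ρ * rewardSum d β n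

lemma partitionSum_succ : partitionSum d (n + 1) = partitionSum d n + d (n + 1) :=
  sum_range_succ _ _

lemma rewardSum_succ : rewardSum d β (n + 1) = rewardSum d β n + d n * β n :=
  sum_range_succ _ _

lemma partitionSum_pos (hd : ∀ k, 0 < d k) : 0 < partitionSum d n :=
  sum_pos (fun k _ => hd k) nonempty_range_add_one

lemma rewardSum_succ_mul_sub (h : d (n + 1) = ρ * d n) :
    rewardSum d β (n + 1) * partitionSum d n - rewardSum d β n * partitionSum d (n + 1) =
      d n * welfareGap d β ρ n := by
  rw [rewardSum_succ, partitionSum_succ, h, welfareGap]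
  ring

lemma welfareGap_succ (h : d (n + 1) = ρ * d n) :
    welfareGap d β ρ (n + 1) = welfareGap d β ρ n + (β (n + 1) - β n) * partitionSum d (n + 1) := by
  simp only [welfareGap, rewardSum_succ, partitionSum_succ, h]
  ring

lemma averageReward_succ_le_iff (hd : ∀ k, 0 < d k) (h : d (n + 1) = ρ * d n) :
    averageReward d β (n + 1) ≤ averageReward d β n ↔ welfareGap d β ρ n ≤ 0 := by
  rw [averageReward, averageReward, div_le_div_iff₀ (partitionSum_pos hd) (partitionSum_pos hd),
    ← sub_nonpos, rewardSum_succ_mul_sub h]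
  simpa only [mul_zero] using mul_le_mul_iff_right₀ (b := welfareGap d β ρ n) (c := 0) (hd n)

lemma welfareGap_succ_le (hd : ∀ k, 0 < d k) (hβ : Antitone β) (h : d (n + 1) = ρ * d n) :
    welfareGap d β ρ (n + 1) ≤ welfareGap d β ρ n := by
  rw [welfareGap_succ h, add_le_iff_nonpos_right]
  exact mul_nonpos_of_nonpos_of_nonneg (sub_nonpos.2 (hβ n.le_succ)) (partitionSum_pos hd).le

theorem averageReward_antitoneOn_of_succ_le {m : ℕ} (hd : ∀ k, 0 < d k)
    (hgeom : ∀ k, m ≤ k → d (k + 1) = ρ * d k) (hβ : Antitone β)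
    (hm : averageReward d β (m + 1) ≤ averageReward d β m) :
    AntitoneOn (averageReward d β) (Set.Ici m) := by
  have hgap : ∀ k, m ≤ k → welfareGap d β ρ k ≤ 0 := by
    intro k hk
    induction k, hk using Nat.le_induction with
    | base => exact (averageReward_succ_le_iff hd (hgeom m le_rfl)).1 hm
    | succ k hk ih => exact (welfareGap_succ_le hd hβ (hgeom k hk)).trans ih
  exact antitoneOn_nat_Ici_of_succ_le fun k hk =>
    (averageReward_succ_le_iff hd (hgeom k hk)).2 (hgap k hk)

end GeometricTail

theorem congestion_limited_welfare_comparison_general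
    (R Cw Cp μ lam : ℝ) (c : ℕ)
    (hCw : 0 < Cw) (hμ : 0 < μ) (hlam : 0 < lam)
    (hc : 1 ≤ c)
    (ρ : ℝ) (hρ : ρ = lam / (c * μ))
    (β : ℕ → ℝ)
    (hβ : ∀ k : ℕ, β k = R - Cw * (k + 1) / (μ * c) - Cp / μ)
    (d : ℕ → ℝ)
    (hd : ∀ k : ℕ, d k = if k < c then (ρ * c) ^ k / (Nat.factorial k)
        else (ρ * c) ^ c / (Nat.factorial c) * ρ ^ (k - c))
    (D : ℕ → ℝ) (hD : ∀ n : ℕ, D n = ∑ k ∈ Finset.range (n + 1), d k)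
    (Usw : ℕ → ℝ)
    (hU : ∀ n : ℕ, Usw n = lam * ∑ k ∈ Finset.range n, (d k / D n) * β k)
    (nso : ℕ) (hnsoc : c ≤ nso) (hmax : ∀ n : ℕ, Usw n ≤ Usw nso) :
    (∀ m m' : ℕ, nso ≤ m → m ≤ m' → Usw m' ≤ Usw m) ∧
    (∀ ncl nb : ℕ, nso ≤ ncl → ncl ≤ nb → Usw nb ≤ Usw ncl) := by
  have hcpos : (0 : ℝ) < c := by exact_mod_cast hc
  have hρpos : 0 < ρ := hρ ▸ by positivity
  have hdpos : ∀ k, 0 < d k := fun k => by rw [hd k]; split <;> positivity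
  have hgeom : ∀ k, c ≤ k → d (k + 1) = ρ * d k := fun k hk => by
    rw [hd, hd, if_neg (by omega), if_neg (by omega), Nat.sub_add_comm hk, pow_succ]
    ring
  have hβanti : Antitone β := antitone_nat_of_succ_le fun k => by
    rw [hβ, hβ]
    push_cast
    gcongr
    linarith
  have hUavg : ∀ n, Usw n = lam * averageReward d β n := fun n => by
    rw [hU, averageReward, rewardSum, partitionSum, ← hD, sum_div]
    congr 1
    exact sum_congr rfl fun k _ => by ring
  have hanti : AntitoneOn (averageReward d β) (Set.Ici nso) := by
    refine averageReward_antitoneOn_of_succ_le hdpos (fun k hk => hgeom k (hnsoc.trans hk))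
      hβanti ?_
    simpa only [hUavg, mul_le_mul_iff_right₀ hlam] using hmax (nso + 1)
  have hmono : ∀ m m' : ℕ, nso ≤ m → m ≤ m' → Usw m' ≤ Usw m := fun m m' hm hmm' => by
    rw [hUavg, hUavg]
    exact mul_le_mul_of_nonneg_left (hanti hm (hm.trans hmm') hmm') hlam.le
  exact ⟨hmono, hmono⟩

/-- Welfare comparison for congestion-limited balking levels: if `n_so ≥ c` maximizes
`U_sw` over `ℕ`, then `U_sw` is nonincreasing on `{m : m ≥ n_so}`; consequently for
`n_so ≤ n_cl ≤ n_b`, `U_sw n_b ≤ U_sw n_cl`. -/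
theorem congestion_limited_welfare_comparison
    (R Cw Cp μ lam : ℝ) (c : ℕ)
    (hR : 0 < R) (hCw : 0 < Cw) (hCp : 0 < Cp) (hμ : 0 < μ) (hlam : 0 < lam)
    (hc : 1 ≤ c)
    (ρ : ℝ) (hρ : ρ = lam / (c * μ))
    (β : ℕ → ℝ)
    (hβ : ∀ k : ℕ, β k = R - Cw * (k + 1) / (μ * c) - Cp / μ)
    (d : ℕ → ℝ)
    (hd : ∀ k : ℕ, d k = if k < c then (ρ * c) ^ k / (Nat.factorial k)
        else (ρ * c) ^ c / (Nat.factorial c) * ρ ^ (k - c))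
    (D : ℕ → ℝ) (hD : ∀ n : ℕ, D n = ∑ k ∈ Finset.range (n + 1), d k)
    (Usw : ℕ → ℝ)
    (hU : ∀ n : ℕ, Usw n = lam * ∑ k ∈ Finset.range n, (d k / D n) * β k)
    (nso : ℕ) (hnsoc : c ≤ nso) (hmax : ∀ n : ℕ, Usw n ≤ Usw nso) :
    (∀ m m' : ℕ, nso ≤ m → m ≤ m' → Usw m' ≤ Usw m) ∧
    (∀ ncl nb : ℕ, nso ≤ ncl → ncl ≤ nb → Usw nb ≤ Usw ncl) :=
  congestion_limited_welfare_comparison_general R Cw Cp μ lam c hCw hμ hlam hc ρ hρ β hβ d hd D hD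
    Usw hU nso hnsoc hmax
end
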